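/- Let W ⊆ ℂⁿ be a set invariant under the n-torus action (if z ∈ W and θ ∈ ℝⁿ then (e^{iθ₁}z₁, …, e^{iθₙ}zₙ) ∈ W) and weighted homogeneous (if z ∈ W and t ∈ [0,1] then (t^{α₁}z₁, …, t^{αₙ}zₙ) ∈ W for a fixed α ∈ ℕⁿ). Suppose there is a polyradius (r₁, …, rₙ) with rⱼ > 0 such that every z with |zⱼ| = rⱼ for all j belongs to W. Then every point p of the closed polydisc {z : |zⱼ| ≤ rⱼ for all j} lies in the image of an analytic disc attached to W. -/

import Mathlib

/-!
For `‖p i‖ < r i` the disc `ζ ↦ r i * (ζ + a) / (1 + conj a * ζ)` with `a = p i / r i` is a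
scaled Blaschke factor: it sends `0` to `p i` and the unit circle into the circle of radius `r i`;
when `‖p i‖ = r i` the constant disc does the same. Taking these discs coordinatewise gives an
analytic disc through `p` whose boundary lies on the torus `∏ {|zᵢ| = rᵢ} ⊆ W`.
-/

open Metric Complex Set

open ComplexConjugate

namespace Complex

/-- The Blaschke factor sending `0` to `a`. -/
noncomputable def blaschkeFactor (a ζ : ℂ) : ℂ := (ζ + a) / (1 + conj a * ζ)

variable {a ζ : ℂ}

@[simp]
theorem blaschkeFactor_zero (a : ℂ) : blaschkeFactor a 0 = a := by
  simp [blaschkeFactor]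

theorem one_add_conj_mul_ne_zero (ha : ‖a‖ < 1) (hζ : ‖ζ‖ ≤ 1) : 1 + conj a * ζ ≠ 0 := by
  intro h
  have hlt : ‖conj a * ζ‖ < 1 := by
    rw [norm_mul, norm_conj]
    nlinarith [norm_nonneg a, norm_nonneg ζ]
  rw [show conj a * ζ = -1 by linear_combination h] at hlt
  simp at hlt

theorem differentiableOn_blaschkeFactor (ha : ‖a‖ < 1) :
    DifferentiableOn ℂ (blaschkeFactor a) (closedBall 0 1) := by
  refine DifferentiableOn.div (by fun_prop) (by fun_prop) fun ζ hζ => ?_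
  exact one_add_conj_mul_ne_zero ha (mem_closedBall_zero_iff.mp hζ)

theorem norm_blaschkeFactor_of_norm_eq_one (ha : ‖a‖ < 1) (hζ : ‖ζ‖ = 1) :
    ‖blaschkeFactor a ζ‖ = 1 := by
  have hden := one_add_conj_mul_ne_zero ha hζ.le
  -- On the unit circle `conj ζ = ζ⁻¹`, so `conj (ζ + a) = conj ζ * (1 + conj a * ζ)`.
  have hconj : conj (ζ + a) = conj ζ * (1 + conj a * ζ) := by
    have hζζ : ζ * conj ζ = 1 := by
      rw [mul_conj, normSq_eq_norm_sq, hζ]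
      norm_num
    rw [map_add]
    linear_combination -conj a * hζζ
  have hnum : ‖ζ + a‖ = ‖1 + conj a * ζ‖ := by
    rw [← norm_conj (ζ + a), hconj, norm_mul, norm_conj, hζ, one_mul]
  rw [blaschkeFactor, norm_div, hnum, div_self (norm_ne_zero_iff.mpr hden)]

end Complex

open Complex in
theorem exists_disc_through_of_norm_le {w : ℂ} {R : ℝ} (hw : ‖w‖ ≤ R) :
    ∃ ψ : ℂ → ℂ, DifferentiableOn ℂ ψ (closedBall 0 1) ∧
      (∀ ζ : ℂ, ‖ζ‖ = 1 → ‖ψ ζ‖ = R) ∧ ψ 0 = w := by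
  rcases hw.lt_or_eq with hlt | heq
  · have hR : 0 < R := (norm_nonneg w).trans_lt hlt
    have hR' : (R : ℂ) ≠ 0 := ofReal_ne_zero.mpr hR.ne'
    have ha : ‖w / R‖ < 1 := by
      rwa [norm_div, norm_real, Real.norm_of_nonneg hR.le, div_lt_one hR]
    refine ⟨fun ζ => R * blaschkeFactor (w / R) ζ,
      (differentiableOn_blaschkeFactor ha).const_mul _, fun ζ hζ => ?_, ?_⟩
    · rw [norm_mul, norm_blaschkeFactor_of_norm_eq_one ha hζ, norm_real,
        Real.norm_of_nonneg hR.le, mul_one]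
    · simp only [blaschkeFactor_zero]
      field_simp
  · exact ⟨fun _ => w, differentiableOn_const w, fun _ _ => heq, rfl⟩

theorem polydisc_in_disc_hull_of_torus_invariant_set_general
    (n : ℕ) (W : Set (Fin n → ℂ))
    (r : Fin n → ℝ)
    (hW : ∀ z : Fin n → ℂ, (∀ i, ‖z i‖ = r i) → z ∈ W) :
    ∀ p : Fin n → ℂ, (∀ i, ‖p i‖ ≤ r i) →
      ∃ φ : ℂ → (Fin n → ℂ),
        ContinuousOn φ (closedBall 0 1) ∧
        DifferentiableOn ℂ φ (ball 0 1) ∧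
        φ '' sphere (0 : ℂ) 1 ⊆ W ∧
        p ∈ φ '' ball (0 : ℂ) 1 := by
  intro p hp
  choose ψ hψ_diff hψ_circle hψ_zero using fun i => exists_disc_through_of_norm_le (hp i)
  have hφ : DifferentiableOn ℂ (fun ζ i => ψ i ζ) (closedBall 0 1) :=
    differentiableOn_pi.mpr hψ_diff
  refine ⟨fun ζ i => ψ i ζ, hφ.continuousOn, hφ.mono ball_subset_closedBall, ?_,
    ⟨0, mem_ball_self one_pos, funext hψ_zero⟩⟩
  rintro _ ⟨ζ, hζ, rfl⟩
  exact hW _ fun i => hψ_circle i ζ (mem_sphere_zero_iff_norm.mp hζ)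

theorem polydisc_in_disc_hull_of_torus_invariant_set
    (n : ℕ) (W : Set (Fin n → ℂ)) (α : Fin n → ℕ) (hα : ∀ i, 0 < α i)
    (htorus : ∀ z ∈ W, ∀ θ : Fin n → ℝ,
      (fun i => Complex.exp ((θ i : ℂ) * Complex.I) * z i) ∈ W)
    (hhom : ∀ z ∈ W, ∀ t ∈ Icc (0 : ℝ) 1,
      (fun i => ((t : ℂ)) ^ (α i) * z i) ∈ W)
    (r : Fin n → ℝ) (hr : ∀ i, 0 < r i)
    (hW : ∀ z : Fin n → ℂ, (∀ i, ‖z i‖ = r i) → z ∈ W) :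
    ∀ p : Fin n → ℂ, (∀ i, ‖p i‖ ≤ r i) →
      ∃ φ : ℂ → (Fin n → ℂ),
        ContinuousOn φ (closedBall 0 1) ∧
        DifferentiableOn ℂ φ (ball 0 1) ∧
        φ '' sphere (0 : ℂ) 1 ⊆ W ∧
        p ∈ φ '' ball (0 : ℂ) 1 :=
  polydisc_in_disc_hull_of_torus_invariant_set_general n W r hW
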